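/- arXiv:2112.06255 — 5 statements merged into one kernel-verified Lean document; each statement's English description precedes it below -/
import Mathlib

section
/- For the linear extrapolation formula y' = 2(1-ε)^N f - (1-2ε)^N f, the residual bias satisfies |y' - f| ≤ ε²N²|f| for all ε ∈ [0, 1/2] and natural numbers N. (Equivalently, 0 ≤ 1 - (2(1-ε)^N - (1-2ε)^N) ≤ ε²N².) -/
/-!
With `a = 1 - ε` and `b = 1 - 2ε`, the bias `u N = 1 - 2aᴺ + bᴺ` has increments
`u (n + 1) - u n = 2ε (aⁿ - bⁿ)`, and `0 ≤ aⁿ - bⁿ ≤ n (a - b) = nε` since `0 ≤ b ≤ a ≤ 1`.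
Summing, `0 ≤ u N ≤ 2ε² (0 + 1 + ⋯ + (N - 1)) = ε² N (N - 1) ≤ ε² N²`.
-/

theorem pow_sub_pow_le_natCast_mul_sub {R : Type*} [CommRing R] [LinearOrder R]
    [IsStrictOrderedRing R] {a b : R} (hb : 0 ≤ b) (hba : b ≤ a) (ha : a ≤ 1) (n : ℕ) :
    a ^ n - b ^ n ≤ n * (a - b) := by
  have hmax : max |a| |b| ^ (n - 1) ≤ 1 := by
    apply pow_le_one₀ (le_max_of_le_left (abs_nonneg a))
    rw [abs_of_nonneg hb, abs_of_nonneg (hb.trans hba)]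
    exact max_le ha (hba.trans ha)
  calc a ^ n - b ^ n ≤ |a ^ n - b ^ n| := le_abs_self _
    _ ≤ |a - b| * n * max |a| |b| ^ (n - 1) := abs_pow_sub_pow_le ..
    _ ≤ |a - b| * n := mul_le_of_le_one_right (by positivity) hmax
    _ = n * (a - b) := by rw [abs_of_nonneg (sub_nonneg.2 hba), mul_comm]

theorem linear_zne_bias_bounds {ε : ℝ} (hε0 : 0 ≤ ε) (hε : ε ≤ 1 / 2) (n : ℕ) :
    0 ≤ 1 - 2 * (1 - ε) ^ n + (1 - 2 * ε) ^ n ∧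
      1 - 2 * (1 - ε) ^ n + (1 - 2 * ε) ^ n ≤ ε ^ 2 * n * (n - 1) := by
  induction n with
  | zero => norm_num
  | succ n ih =>
    have hb : 0 ≤ 1 - 2 * ε := by linarith
    have hba : 1 - 2 * ε ≤ 1 - ε := by linarith
    have hgap_nonneg : 0 ≤ (1 - ε) ^ n - (1 - 2 * ε) ^ n :=
      sub_nonneg.2 (pow_le_pow_left₀ hb hba n)
    have hgap_le : (1 - ε) ^ n - (1 - 2 * ε) ^ n ≤ n * ε := by
      have h := pow_sub_pow_le_natCast_mul_sub hb hba (by linarith) n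
      rwa [show 1 - ε - (1 - 2 * ε) = ε by ring] at h
    have hstep : 1 - 2 * (1 - ε) ^ (n + 1) + (1 - 2 * ε) ^ (n + 1) =
        (1 - 2 * (1 - ε) ^ n + (1 - 2 * ε) ^ n) + 2 * ε * ((1 - ε) ^ n - (1 - 2 * ε) ^ n) := by
      ring
    have hincr_le : 2 * ε * ((1 - ε) ^ n - (1 - 2 * ε) ^ n) ≤ 2 * ε * (n * ε) :=
      mul_le_mul_of_nonneg_left hgap_le (by positivity)
    rw [hstep]
    push_cast
    constructor
    · exact add_nonneg ih.1 (mul_nonneg (by positivity) hgap_nonneg)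
    · linear_combination ih.2 + hincr_le

/-- Linear zero-noise extrapolation under the global depolarising model:
the residual bias of `y' = 2(1-ε)^N f - (1-2ε)^N f` satisfies
`|y' - f| ≤ ε² N² |f|` for all `ε ∈ [0, 1/2]` and natural `N`. -/
theorem stmt_0 (ε : ℝ) (hε0 : 0 ≤ ε) (hε : ε ≤ 1 / 2) (N : ℕ) (f : ℝ) :
    |(2 * (1 - ε) ^ N * f - (1 - 2 * ε) ^ N * f) - f| ≤ ε ^ 2 * (N : ℝ) ^ 2 * |f| := by
  obtain ⟨hbias_nonneg, hbias_le⟩ := linear_zne_bias_bounds hε0 hε N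
  have hbias : |2 * (1 - ε) ^ N - (1 - 2 * ε) ^ N - 1| ≤ ε ^ 2 * (N : ℝ) ^ 2 := by
    rw [abs_of_nonpos (by linarith)]
    linarith [mul_nonneg (sq_nonneg ε) N.cast_nonneg]
  calc |(2 * (1 - ε) ^ N * f - (1 - 2 * ε) ^ N * f) - f|
      = |2 * (1 - ε) ^ N - (1 - 2 * ε) ^ N - 1| * |f| := by rw [← abs_mul]; ring_nf
    _ ≤ ε ^ 2 * (N : ℝ) ^ 2 * |f| := mul_le_mul_of_nonneg_right hbias (abs_nonneg f)
end

section
/- With ε_t = 1-(1-ε)^N and y' the second-order virtual distillation value [(1-ε_t)² + 2^{1-n}(1-ε_t)ε_t]/[(1-ε_t)² + 2^{1-n}(1-ε_t)ε_t + 2^{-n}ε_t²] · f, the bias satisfies |y' - f| ≤ 2^{-n} ε_t² /(1-ε_t)² · |f| ≤ C ε² N² |f| for εN small, i.e. the bias is O(ε²N²). -/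
/-! Writing `p = (1-ε_t)² + 2^{1-n}(1-ε_t)ε_t` and `q = 2^{-n}ε_t²`, the distilled value is
`p/(p+q) · f`, so the bias is `q/(p+q) · |f| ≤ q/(1-ε_t)² · |f|`. Bernoulli's inequality gives
`ε_t ≤ εN`, hence `1 - ε_t ≥ 1/2` once `εN ≤ 1/2`, and the bias is at most `4 ε² N² |f|`. -/

lemma abs_div_add_mul_sub_self_le {K : Type*} [Field K] [LinearOrder K] [IsStrictOrderedRing K]
    {p q r : K} (f : K) (hr : 0 < r) (hrp : r ≤ p) (hq : 0 ≤ q) :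
    |p / (p + q) * f - f| ≤ q / r * |f| := by
  have hpq : 0 < p + q := by linarith
  have hbias : p / (p + q) * f - f = -(q / (p + q)) * f := by
    field_simp
    ring
  rw [hbias, abs_mul, abs_neg, abs_of_nonneg (by positivity)]
  gcongr
  linarith

lemma one_sub_one_sub_pow_le_mul {ε : ℝ} (hε : ε ≤ 2) (N : ℕ) : 1 - (1 - ε) ^ N ≤ N * ε := by
  have := one_add_mul_sub_le_pow (a := 1 - ε) (by linarith) N
  linarith

/-- Bias of second-order virtual distillation under the global depolarising model is
`O(ε²N²)`: with `ε_t = 1-(1-ε)^N` and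
`y' = [(1-ε_t)² + 2^{1-n}(1-ε_t)ε_t]/[(1-ε_t)² + 2^{1-n}(1-ε_t)ε_t + 2^{-n}ε_t²] · f`,
one has `|y' - f| ≤ 2^{-n} ε_t²/(1-ε_t)² · |f|`, and there is a constant `C > 0` such
that `|y' - f| ≤ C ε² N² |f|` whenever `εN` is small (`ε N ≤ 1/2`). -/
theorem stmt_5 :
    ∃ C : ℝ, 0 < C ∧
      ∀ (n N : ℕ) (ε f : ℝ), 0 ≤ ε → ε < 1 → 1 ≤ N →
        ∀ εt y' : ℝ, εt = 1 - (1 - ε) ^ N →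
          y' = ((1 - εt) ^ 2 + (2 : ℝ) ^ ((1 : ℤ) - n) * (1 - εt) * εt)
              / ((1 - εt) ^ 2 + (2 : ℝ) ^ ((1 : ℤ) - n) * (1 - εt) * εt
                  + (2 : ℝ) ^ (-(n : ℤ)) * εt ^ 2) * f →
          |y' - f| ≤ (2 : ℝ) ^ (-(n : ℤ)) * εt ^ 2 / (1 - εt) ^ 2 * |f|
          ∧ (ε * N ≤ 1 / 2 → |y' - f| ≤ C * ε ^ 2 * (N : ℝ) ^ 2 * |f|) := by
  refine ⟨4, by norm_num, fun n N ε f hε hε1 _ εt y' hεt hy' => ?_⟩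
  have hεt0 : 0 ≤ εt := hεt ▸ sub_nonneg.2 (pow_le_one₀ (by linarith) (by linarith))
  have ha : 0 < 1 - εt := by
    rw [hεt, sub_sub_cancel]
    exact pow_pos (by linarith) N
  have hbias : |y' - f| ≤ (2 : ℝ) ^ (-(n : ℤ)) * εt ^ 2 / (1 - εt) ^ 2 * |f| :=
    hy' ▸ abs_div_add_mul_sub_self_le f (pow_pos ha 2)
      (le_add_of_nonneg_right (mul_nonneg (mul_nonneg (by positivity) ha.le) hεt0))
      (by positivity)
  refine ⟨hbias, fun hsmall => hbias.trans ?_⟩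
  have hεtN : εt ≤ ε * N := by
    rw [hεt, mul_comm]
    exact one_sub_one_sub_pow_le_mul (by linarith) N
  have h2n : (2 : ℝ) ^ (-(n : ℤ)) ≤ 1 := zpow_le_one_of_nonpos₀ (by norm_num) (by simp)
  calc (2 : ℝ) ^ (-(n : ℤ)) * εt ^ 2 / (1 - εt) ^ 2 * |f|
      ≤ 1 * (ε * N) ^ 2 / (1 / 2) ^ 2 * |f| := by gcongr; linarith
    _ = 4 * ε ^ 2 * (N : ℝ) ^ 2 * |f| := by ring
end

section
/- With the simple compensation formula y' = (1-ε₀)^{-1} y applied to y = (1-ε₀+δ)f, the root mean square error equals (1-ε₀)^{-1} √η Δ, where η = ⟨f²⟩ and Δ² = ⟨δ² f²⟩/⟨f²⟩; in particular the RMSE before mitigation √(η(ε₀² + Δ²)) is reduced by a factor of at least ε₀/Δ · (1-ε₀) when compensating the average depolarising rate. -/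
/-!
After compensation the pointwise error is `(1-ε₀)⁻¹ y - f = -(1-ε₀)⁻¹ δ f`, and before it
`y - f = -(ε₀ + δ) f`. Averaging is linear, so both mean-square errors are combinations of
`⟨f²⟩ = η`, `⟨δ f²⟩ = 0` and `⟨δ² f²⟩ = η Δ²`. The reduction bound is then just
`ε₀ √η ≤ √(η (ε₀² + Δ²))`.
-/

noncomputable def average (ι : Type*) [Fintype ι] : (ι → ℝ) →ₗ[ℝ] ℝ :=
  (Fintype.card ι : ℝ)⁻¹ • ∑ i, LinearMap.proj i

lemma average_apply {ι : Type*} [Fintype ι] (g : ι → ℝ) :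
    average ι g = (∑ i, g i) / Fintype.card ι := by
  simp [average, div_eq_inv_mul]

section
variable {ι : Type*} (L : (ι → ℝ) →ₗ[ℝ] ℝ) {f δ y : ι → ℝ} {ε₀ : ℝ}

lemma map_sq_compensated_error (hε₀ : ε₀ ≠ 1) (hy : ∀ i, y i = (1 - (ε₀ + δ i)) * f i) :
    L (fun i => ((1 - ε₀)⁻¹ * y i - f i) ^ 2)
      = ((1 - ε₀)⁻¹) ^ 2 * L (fun i => δ i ^ 2 * f i ^ 2) := by
  have hc : 1 - ε₀ ≠ 0 := sub_ne_zero.mpr hε₀.symm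
  rw [← smul_eq_mul, ← map_smul]
  congr 1
  funext i
  rw [hy, Pi.smul_apply, smul_eq_mul]
  field_simp
  ring

lemma map_sq_error (hy : ∀ i, y i = (1 - (ε₀ + δ i)) * f i) :
    L (fun i => (y i - f i) ^ 2)
      = ε₀ ^ 2 * L (fun i => f i ^ 2) + 2 * ε₀ * L (fun i => δ i * f i ^ 2)
        + L (fun i => δ i ^ 2 * f i ^ 2) := by
  have hsplit : (fun i => (y i - f i) ^ 2)
      = ε₀ ^ 2 • (fun i => f i ^ 2) + (2 * ε₀) • (fun i => δ i * f i ^ 2)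
        + fun i => δ i ^ 2 * f i ^ 2 := by
    funext i
    simp only [hy, Pi.add_apply, Pi.smul_apply, smul_eq_mul]
    ring
  rw [hsplit, map_add, map_add, map_smul, map_smul, smul_eq_mul, smul_eq_mul]

end

lemma sqrt_inv_sq_mul_sq_mul {c η Δ : ℝ} (hc : 0 ≤ c) (hη : 0 ≤ η) (hΔ : 0 ≤ Δ) :
    √(c⁻¹ ^ 2 * (Δ ^ 2 * η)) = c⁻¹ * √η * Δ := by
  rw [show c⁻¹ ^ 2 * (Δ ^ 2 * η) = (c⁻¹ * √η * Δ) ^ 2 by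
    rw [mul_pow, mul_pow, Real.sq_sqrt hη]; ring]
  exact Real.sqrt_sq (by positivity)

lemma mul_sqrt_le_sqrt_mul_sq_add_sq (ε₀ : ℝ) {η : ℝ} (Δ : ℝ) (hη : 0 ≤ η) :
    ε₀ * √η ≤ √(η * (ε₀ ^ 2 + Δ ^ 2)) :=
  calc ε₀ * √η ≤ |ε₀| * √η := by gcongr; exact le_abs_self ε₀
    _ = √(η * ε₀ ^ 2) := by rw [Real.sqrt_mul hη, Real.sqrt_sq_eq_abs, mul_comm]
    _ ≤ √(η * (ε₀ ^ 2 + Δ ^ 2)) := by gcongr; nlinarith [sq_nonneg Δ]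

theorem stmt_15_general {ι : Type*} [Fintype ι]
    (f δ y : ι → ℝ) (ε₀ Δ η : ℝ)
    (E : (ι → ℝ) → ℝ) (hE : ∀ g, E g = (∑ i, g i) / (Fintype.card ι))
    (hy : ∀ i, y i = (1 - (ε₀ + δ i)) * f i)
    (hδ : E (fun i => δ i * (f i) ^ 2) = 0)
    (hη : η = E (fun i => (f i) ^ 2))
    (hε₀1 : ε₀ < 1)
    (hΔ0 : 0 ≤ Δ) (hΔ : Δ ^ 2 = E (fun i => (δ i) ^ 2 * (f i) ^ 2) / η) (hη0 : 0 < η) :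
    Real.sqrt (E (fun i => ((1 - ε₀)⁻¹ * y i - f i) ^ 2))
        = (1 - ε₀)⁻¹ * Real.sqrt η * Δ
    ∧ Real.sqrt (E (fun i => (y i - f i) ^ 2)) = Real.sqrt (η * (ε₀ ^ 2 + Δ ^ 2))
    ∧ (0 < Δ →
        Real.sqrt (E (fun i => (y i - f i) ^ 2))
          ≥ (ε₀ / Δ * (1 - ε₀))
            * Real.sqrt (E (fun i => ((1 - ε₀)⁻¹ * y i - f i) ^ 2))) := by
  obtain rfl : E = average ι := funext fun g => (hE g).trans (average_apply g).symm
  have hδf : average ι (fun i => δ i ^ 2 * f i ^ 2) = Δ ^ 2 * η := by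
    rw [hΔ, div_mul_cancel₀ _ hη0.ne']
  have hcomp : √(average ι fun i => ((1 - ε₀)⁻¹ * y i - f i) ^ 2) = (1 - ε₀)⁻¹ * √η * Δ := by
    rw [map_sq_compensated_error _ hε₀1.ne hy, hδf,
      sqrt_inv_sq_mul_sq_mul (sub_nonneg.mpr hε₀1.le) hη0.le hΔ0]
  have hraw : √(average ι fun i => (y i - f i) ^ 2) = √(η * (ε₀ ^ 2 + Δ ^ 2)) := by
    rw [map_sq_error _ hy, hδ, ← hη, hδf]
    congr 1
    ring
  refine ⟨hcomp, hraw, fun hΔpos => ?_⟩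
  have hc : 1 - ε₀ ≠ 0 := sub_ne_zero.mpr hε₀1.ne'
  rw [hcomp, hraw, show ε₀ / Δ * (1 - ε₀) * ((1 - ε₀)⁻¹ * √η * Δ) = ε₀ * √η by field_simp]
  exact mul_sqrt_le_sqrt_mul_sq_add_sq ε₀ Δ hη0.le

/-- Compensating the average depolarising rate. With `y_C = (1-(ε₀+δ_C)) f_C`, `⟨δ f²⟩ = 0`, `η = ⟨f²⟩`, `Δ² = ⟨δ² f²⟩/η`:
the formula `y' = (1-ε₀)⁻¹ y` has RMSE `(1-ε₀)⁻¹ √η Δ`, the RMSE before mitigation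
is `√(η(ε₀² + Δ²))`, and the reduction factor is at least `ε₀/Δ · (1-ε₀)`. -/
theorem stmt_15 {ι : Type*} [Fintype ι] [Nonempty ι]
    (f δ y : ι → ℝ) (ε₀ Δ η : ℝ)
    (E : (ι → ℝ) → ℝ) (hE : ∀ g, E g = (∑ i, g i) / (Fintype.card ι))
    (hy : ∀ i, y i = (1 - (ε₀ + δ i)) * f i)
    (hδ : E (fun i => δ i * (f i) ^ 2) = 0)
    (hη : η = E (fun i => (f i) ^ 2))
    (hε₀0 : 0 ≤ ε₀) (hε₀1 : ε₀ < 1)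
    (hΔ0 : 0 ≤ Δ) (hΔ : Δ ^ 2 = E (fun i => (δ i) ^ 2 * (f i) ^ 2) / η) (hη0 : 0 < η) :
    Real.sqrt (E (fun i => ((1 - ε₀)⁻¹ * y i - f i) ^ 2))
        = (1 - ε₀)⁻¹ * Real.sqrt η * Δ
    ∧ Real.sqrt (E (fun i => (y i - f i) ^ 2)) = Real.sqrt (η * (ε₀ ^ 2 + Δ ^ 2))
    ∧ (0 < Δ →
        Real.sqrt (E (fun i => (y i - f i) ^ 2))
          ≥ (ε₀ / Δ * (1 - ε₀))
            * Real.sqrt (E (fun i => ((1 - ε₀)⁻¹ * y i - f i) ^ 2))) :=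
  stmt_15_general f δ y ε₀ Δ η E hE hy hδ hη hε₀1 hΔ0 hΔ hη0
end

section
/- (Theorem 1) For the general extrapolation formula y' = Σᵢ qᵢ yᵢ with yᵢ = (1-εᵢ + δᵢ)f, where E = (1-ε₁, 1-ε₂, …)ᵀ, K is the positive semi-definite covariance matrix K_{ij} = η^{-1}⟨δᵢδⱼ f²⟩ with diagonal entries Δᵢ², and η = ⟨f²⟩, the minimum over coefficient vectors Λ = (q₁, q₂, …)ᵀ of the RMSE √(η[(EᵀΛ - 1)² + ΛᵀKΛ]) is at most √(η EᵀKE)/‖E‖² ≤ √(η Σᵢ Δᵢ²)/‖E‖. -/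
open Matrix

/-! With `Λ = E / ‖E‖²` the bias term `EᵀΛ - 1` vanishes and `ΛᵀKΛ = EᵀKE / ‖E‖⁴`. For the second
bound, the `2 × 2` principal minors of `K` give `|K i j| ≤ √(K i i) √(K j j)`, so by Cauchy–Schwarz
`EᵀKE ≤ (∑ᵢ |Eᵢ| √(K i i))² ≤ tr K ‖E‖²`. -/

namespace Matrix.PosSemidef

variable {n : Type*} {K : Matrix n n ℝ}

theorem sq_apply_le_mul_diag (hK : K.PosSemidef) (i j : n) : K i j ^ 2 ≤ K i i * K j j := by
  have hdet := (hK.submatrix ![i, j]).det_nonneg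
  have hsymm : K j i = K i j := by simpa using congr_fun₂ hK.isHermitian i j
  rw [det_fin_two] at hdet
  simp only [submatrix_apply, Matrix.cons_val_zero, Matrix.cons_val_one, hsymm, ← sq] at hdet
  linarith

theorem abs_apply_le_sqrt_mul_sqrt (hK : K.PosSemidef) (i j : n) :
    |K i j| ≤ √(K i i) * √(K j j) := by
  rw [← Real.sqrt_mul hK.diag_nonneg]
  exact Real.abs_le_sqrt (hK.sq_apply_le_mul_diag i j)

theorem dotProduct_mulVec_le_trace_mul [Fintype n] (hK : K.PosSemidef) (x : n → ℝ) :
    x ⬝ᵥ K *ᵥ x ≤ K.trace * (x ⬝ᵥ x) := by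
  set w : n → ℝ := fun i ↦ |x i| * √(K i i)
  have hentry : ∀ i j, x i * (K i j * x j) ≤ w i * w j := fun i j ↦
    calc x i * (K i j * x j) ≤ |x i| * |K i j| * |x j| := by
          rw [← abs_mul, ← abs_mul, mul_assoc]; exact le_abs_self _
      _ ≤ |x i| * (√(K i i) * √(K j j)) * |x j| := by
          gcongr; exact hK.abs_apply_le_sqrt_mul_sqrt i j
      _ = w i * w j := by ring
  calc x ⬝ᵥ K *ᵥ x = ∑ i, ∑ j, x i * (K i j * x j) := by
        simp only [dotProduct, mulVec, Finset.mul_sum]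
    _ ≤ ∑ i, ∑ j, w i * w j :=
        Finset.sum_le_sum fun i _ ↦ Finset.sum_le_sum fun j _ ↦ hentry i j
    _ = (∑ i, |x i| * √(K i i)) ^ 2 := by rw [sq, Finset.sum_mul_sum]
    _ ≤ (∑ i, |x i| ^ 2) * ∑ i, √(K i i) ^ 2 := Finset.sum_mul_sq_le_sq_mul_sq _ _ _
    _ = K.trace * (x ⬝ᵥ x) := by
        simp only [sq_abs, Real.sq_sqrt hK.diag_nonneg, trace, diag, dotProduct, ← sq]
        ring

end Matrix.PosSemidef

theorem sq_dotProduct_sub_one_add_dotProduct_mulVec_inv_smul_self {n 𝕜 : Type*} [Fintype n]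
    [Field 𝕜] (A : Matrix n n 𝕜) {E : n → 𝕜} (hE : E ⬝ᵥ E ≠ 0) :
    (E ⬝ᵥ (E ⬝ᵥ E)⁻¹ • E - 1) ^ 2 + (E ⬝ᵥ E)⁻¹ • E ⬝ᵥ A *ᵥ ((E ⬝ᵥ E)⁻¹ • E)
      = E ⬝ᵥ A *ᵥ E / (E ⬝ᵥ E) ^ 2 := by
  simp only [dotProduct_smul, mulVec_smul, smul_dotProduct, smul_eq_mul, inv_mul_cancel₀ hE]
  field_simp
  ring

/-- Theorem 1 of the paper. For the general extrapolation formula `y' = Σᵢ qᵢ yᵢ` with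
`yᵢ = (1-εᵢ+δᵢ)f`, `E = (1-ε₁, 1-ε₂, …)ᵀ`, `K` the positive semi-definite covariance
matrix with diagonal `K_{ii} = Δᵢ²`, and `η = ⟨f²⟩ ≥ 0`, the minimum over coefficient
vectors `Λ` of the RMSE `√(η[(EᵀΛ-1)² + ΛᵀKΛ])` is at most
`√(η EᵀKE)/‖E‖² ≤ √(η Σᵢ Δᵢ²)/‖E‖`. -/
theorem stmt_16 (m : ℕ) (η : ℝ) (hη : 0 ≤ η)
    (E Δ : Fin m → ℝ) (hE : E ≠ 0)
    (K : Matrix (Fin m) (Fin m) ℝ) (hK : K.PosSemidef) (hKd : ∀ i, K i i = (Δ i) ^ 2) :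
    (∃ Λ : Fin m → ℝ,
        Real.sqrt (η * ((E ⬝ᵥ Λ - 1) ^ 2 + Λ ⬝ᵥ K.mulVec Λ))
          ≤ Real.sqrt (η * (E ⬝ᵥ K.mulVec E)) / Real.sqrt (∑ i, (E i) ^ 2) ^ 2)
    ∧ Real.sqrt (η * (E ⬝ᵥ K.mulVec E)) / Real.sqrt (∑ i, (E i) ^ 2) ^ 2
        ≤ Real.sqrt (η * ∑ i, (Δ i) ^ 2) / Real.sqrt (∑ i, (E i) ^ 2) := by
  have hnorm : ∑ i, E i ^ 2 = E ⬝ᵥ E := by simp only [dotProduct, sq]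
  have hpos : 0 < E ⬝ᵥ E := lt_of_le_of_ne (hnorm ▸ by positivity) (Ne.symm (by simpa using hE))
  have htrace : K.trace = ∑ i, Δ i ^ 2 := by simp only [trace, diag, hKd]
  rw [hnorm, Real.sq_sqrt hpos.le, ← htrace]
  constructor
  · refine ⟨(E ⬝ᵥ E)⁻¹ • E, le_of_eq ?_⟩
    rw [sq_dotProduct_sub_one_add_dotProduct_mulVec_inv_smul_self K hpos.ne', mul_div_assoc',
      Real.sqrt_div' _ (by positivity), Real.sqrt_sq hpos.le]
  · rw [← Real.div_sqrt (x := E ⬝ᵥ E), div_div_eq_mul_div,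
      ← Real.sqrt_mul (mul_nonneg hη hK.trace_nonneg), mul_assoc]
    gcongr
    exact hK.dotProduct_mulVec_le_trace_mul E
end

section
/- For ε, ε' ∈ [0,1) and N ≥ 1, if probabilistic error cancellation is performed with assumed depolarising rate ε' instead of the true rate ε, the mitigated value is y' = ((1-ε)/(1-ε'))^N f, and the bias satisfies |y' - f| ≤ N |ε - ε'| / (1 - max(ε,ε')) · max(1, ((1-ε)/(1-ε'))^N) |f|, that is, |((1-ε)^N/(1-ε')^N) - 1| ≤ N |ε - ε'| / (1 - max(ε,ε')) · max(1, ((1-ε)/(1-ε'))^N). -/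
lemma pow_sub_one_abs_le {r : ℝ} (hr : 0 ≤ r) (N : ℕ) :
    |r ^ N - 1| ≤ (N : ℝ) * |r - 1| * max 1 (r ^ N) := by
  have key : r ^ N - 1 = (∑ i ∈ Finset.range N, r ^ i) * (r - 1) := (geom_sum_mul r N).symm
  rw [key, abs_mul]
  have hsum : |∑ i ∈ Finset.range N, r ^ i| ≤ (N : ℝ) * max 1 (r ^ N) := by
    rw [abs_of_nonneg (Finset.sum_nonneg fun i _ => pow_nonneg hr i)]
    calc ∑ i ∈ Finset.range N, r ^ i ≤ ∑ _i ∈ Finset.range N, max 1 (r ^ N) := by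
          apply Finset.sum_le_sum
          intro i hi
          rcases le_or_gt r 1 with h | h
          · exact le_max_of_le_left (pow_le_one₀ hr h)
          · exact le_max_of_le_right (pow_le_pow_right₀ h.le (Finset.mem_range.mp hi).le)
      _ = (N : ℝ) * max 1 (r ^ N) := by simp [mul_comm]
  calc |∑ i ∈ Finset.range N, r ^ i| * |r - 1|
      ≤ ((N : ℝ) * max 1 (r ^ N)) * |r - 1| := by
        apply mul_le_mul_of_nonneg_right hsum (abs_nonneg _)
    _ = (N : ℝ) * |r - 1| * max 1 (r ^ N) := by ring

/-- Probabilistic error cancellation with a mismatched depolarising rate: if the assumed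
rate is `ε'` instead of the true rate `ε`, the mitigated value is
`y' = ((1-ε)/(1-ε'))^N f` and the relative bias satisfies
`|((1-ε)^N/(1-ε')^N) - 1| ≤ N|ε-ε'|/(1-max(ε,ε')) · max(1, ((1-ε)/(1-ε'))^N)`. -/
theorem stmt_18 (ε ε' : ℝ) (hε0 : 0 ≤ ε) (hε1 : ε < 1) (hε'0 : 0 ≤ ε') (hε'1 : ε' < 1)
    (N : ℕ) (hN : 1 ≤ N) (f y' : ℝ)
    (hy' : y' = ((1 - ε) / (1 - ε')) ^ N * f) :
    y' = (1 - ε) ^ N / (1 - ε') ^ N * f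
    ∧ |(1 - ε) ^ N / (1 - ε') ^ N - 1|
        ≤ (N : ℝ) * |ε - ε'| / (1 - max ε ε') * max 1 (((1 - ε) / (1 - ε')) ^ N) := by
  have h1 : (0:ℝ) < 1 - ε := by linarith
  have h2 : (0:ℝ) < 1 - ε' := by linarith
  have hmax : (0:ℝ) < 1 - max ε ε' := by
    rcases max_cases ε ε' with ⟨h, _⟩ | ⟨h, _⟩ <;> rw [h] <;> linarith
  set r : ℝ := (1 - ε) / (1 - ε') with hr
  have hr0 : 0 ≤ r := div_nonneg h1.le h2.le
  have hdiv : (1 - ε) ^ N / (1 - ε') ^ N = r ^ N := (div_pow _ _ _).symm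
  refine ⟨by rw [hy', hdiv], ?_⟩
  rw [hdiv]
  have habs : |r - 1| = |ε - ε'| / (1 - ε') := by
    have h : r - 1 = (ε' - ε) / (1 - ε') := by rw [hr]; field_simp; ring
    rw [h, abs_div, abs_of_pos h2, abs_sub_comm]
  have hle : |ε - ε'| / (1 - ε') ≤ |ε - ε'| / (1 - max ε ε') := by
    apply div_le_div_of_nonneg_left (abs_nonneg _) hmax
    have := le_max_right ε ε'
    linarith
  calc |r ^ N - 1| ≤ (N : ℝ) * |r - 1| * max 1 (r ^ N) := pow_sub_one_abs_le hr0 N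
    _ ≤ (N : ℝ) * (|ε - ε'| / (1 - max ε ε')) * max 1 (r ^ N) := by
        rw [habs]
        apply mul_le_mul_of_nonneg_right _ (le_max_of_le_left zero_le_one)
        exact mul_le_mul_of_nonneg_left hle (Nat.cast_nonneg N)
    _ = (N : ℝ) * |ε - ε'| / (1 - max ε ε') * max 1 (r ^ N) := by ring
end
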